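/- The explicit formulas defining ∇ satisfy the Levi-Civita identity: for all x, y in the set {ξ_{ab}, iξ_{ab} : a,b ∈ ℤ∖{0}} and every finitely supported matrix z, one has 2⟨∇(x,y), z⟩ = ⟨[x,y], z⟩ − ⟨[y,z], x⟩ + ⟨[z,x], y⟩. Explicitly: ∇_{ξ_{ab}}ξ_{cd} = δ_{bc}λ_c²ξ_{ad} − δ_{da}λ_a²ξ_{cb} − δ_{ca}λ_d²ξ_{db} + δ_{db}λ_c²ξ_{ac} + δ_{bd}λ_a²ξ_{ca} − δ_{ac}λ_b²ξ_{bd}; ∇_{iξ_{ab}}iξ_{cd} = −δ_{bc}λ_c²ξ_{ad} + δ_{da}λ_a²ξ_{cb} − δ_{ca}λ_d²ξ_{db} + δ_{db}λ_c²ξ_{ac} + δ_{bd}λ_a²ξ_{ca} − δ_{ac}λ_b²ξ_{bd}; ∇_{ξ_{ab}}iξ_{cd} = δ_{bc}λ_c²iξ_{ad} − δ_{da}λ_a²iξ_{cb} + δ_{ca}λ_d²iξ_{db} − δ_{db}λ_c²iξ_{ac} + δ_{bd}λ_a²iξ_{ca} − δ_{ac}λ_b²iξ_{bd}; ∇_{iξ_{ab}}ξ_{cd}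 = δ_{bc}λ_c²iξ_{ad} − δ_{da}λ_a²iξ_{cb} − δ_{ca}λ_d²iξ_{db} + δ_{db}λ_c²iξ_{ac} − δ_{bd}λ_a²iξ_{ca} + δ_{ac}λ_b²iξ_{bd}. -/

import Mathlib

/-- Nonzero integers, the index set for the matrices. -/
abbrev NZ : Type := {n : ℤ // n ≠ 0}

/-- The real vector space `M` of finitely supported matrices indexed by nonzero integers. -/
abbrev MatC : Type := (NZ × NZ) →₀ ℂ

/-- Matrix multiplication of finitely supported matrices. -/
noncomputable def matMul (A B : MatC) : MatC :=
  A.sum fun p z => B.sum fun q w =>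
    if p.2 = q.1 then Finsupp.single (p.1, q.2) (z * w) else 0

/-- The Lie bracket `[A,B] = AB − BA`. -/
noncomputable def brak (A B : MatC) : MatC := matMul A B - matMul B A

/-- The real inner product `⟨A,B⟩ = Σ_{a,b} Re(A_{ab}·conj(B_{ab}))/(4λ_a²λ_b²)`. -/
noncomputable def rinner (lam : ℤ → ℝ) (A B : MatC) : ℝ :=
  A.sum fun p z => (z * (starRingEnd ℂ) (B p)).re / (4 * lam p.1.1 ^ 2 * lam p.2.1 ^ 2)

/-- The elementary matrix `e_{ab}` (for `a, b` nonzero; junk value `0` otherwise). -/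
noncomputable def eM (a b : ℤ) : MatC :=
  if h : a ≠ 0 ∧ b ≠ 0 then Finsupp.single (⟨a, h.1⟩, ⟨b, h.2⟩) 1 else 0

/-- The basis element `ξ_{ab} = 2λ_aλ_b·e_{ab}`. -/
noncomputable def xiM (lam : ℤ → ℝ) (a b : ℤ) : MatC := (2 * lam a * lam b : ℝ) • eM a b

/-- The basis element `iξ_{ab}`. -/
noncomputable def iXiM (lam : ℤ → ℝ) (a b : ℤ) : MatC := Complex.I • xiM lam a b

/-- Kronecker delta. -/
noncomputable def delz (x y : ℤ) : ℝ := if x = y then 1 else 0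

/-- The formula for `∇_{ξ_{ab}}ξ_{cd}`. -/
noncomputable def nb1 (lam : ℤ → ℝ) (a b c d : ℤ) : MatC :=
  (delz b c * lam c ^ 2) • xiM lam a d - (delz d a * lam a ^ 2) • xiM lam c b
    - (delz c a * lam d ^ 2) • xiM lam d b + (delz d b * lam c ^ 2) • xiM lam a c
    + (delz b d * lam a ^ 2) • xiM lam c a - (delz a c * lam b ^ 2) • xiM lam b d

/-- The formula for `∇_{iξ_{ab}}iξ_{cd}`. -/
noncomputable def nb2 (lam : ℤ → ℝ) (a b c d : ℤ) : MatC :=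
  (delz d a * lam a ^ 2) • xiM lam c b - (delz b c * lam c ^ 2) • xiM lam a d
    - (delz c a * lam d ^ 2) • xiM lam d b + (delz d b * lam c ^ 2) • xiM lam a c
    + (delz b d * lam a ^ 2) • xiM lam c a - (delz a c * lam b ^ 2) • xiM lam b d

/-- The formula for `∇_{ξ_{ab}}iξ_{cd}`. -/
noncomputable def nb3 (lam : ℤ → ℝ) (a b c d : ℤ) : MatC :=
  (delz b c * lam c ^ 2) • iXiM lam a d - (delz d a * lam a ^ 2) • iXiM lam c b
    + (delz c a * lam d ^ 2) • iXiM lam d b - (delz d b * lam c ^ 2) • iXiM lam a c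
    + (delz b d * lam a ^ 2) • iXiM lam c a - (delz a c * lam b ^ 2) • iXiM lam b d

/-- The formula for `∇_{iξ_{ab}}ξ_{cd}`. -/
noncomputable def nb4 (lam : ℤ → ℝ) (a b c d : ℤ) : MatC :=
  (delz b c * lam c ^ 2) • iXiM lam a d - (delz d a * lam a ^ 2) • iXiM lam c b
    - (delz c a * lam d ^ 2) • iXiM lam d b + (delz d b * lam c ^ 2) • iXiM lam a c
    - (delz b d * lam a ^ 2) • iXiM lam c a + (delz a c * lam b ^ 2) • iXiM lam b d

/-
Write `x = u ξ_{ab}` and `y = v ξ_{cd}` with `u, v ∈ {1, i}`. The three terms of the Koszul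
formula then separate by the scalar they carry:
`[x, y] = 2uv (δ_{bc} λ_c² ξ_{ad} − δ_{da} λ_a² ξ_{cb})`, while `⟨[y, z], x⟩ = 2⟨u v̄ A_{cd,ab}, z⟩`
for an explicit matrix `A_{cd,ab}` (the metric adjoint of `ad y` applied to `x`, computed entrywise
on elementary matrices `z`), and the third term is the second one with `x` and `y` exchanged.
So all four formulas are the cases `u, v ∈ {1, i}` of a single formula with coefficients `uv`,
`u v̄` and `v ū`.
-/

open ComplexConjugate

lemma matMul_single_single (s t : NZ × NZ) (u v : ℂ) :
    matMul (Finsupp.single s u) (Finsupp.single t v) =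
      if s.2 = t.1 then Finsupp.single (s.1, t.2) (u * v) else 0 := by
  unfold matMul
  rw [Finsupp.sum_single_index, Finsupp.sum_single_index] <;> simp

lemma matMul_add_left (A B C : MatC) : matMul (A + B) C = matMul A C + matMul B C := by
  unfold matMul
  rw [Finsupp.sum_add_index' (by simp)]
  intro p z z'
  rw [← Finsupp.sum_add]
  congr 1; funext q w
  split <;> simp [add_mul]

lemma matMul_add_right (A B C : MatC) : matMul A (B + C) = matMul A B + matMul A C := by
  unfold matMul
  rw [← Finsupp.sum_add]
  congr 1; funext p z
  rw [Finsupp.sum_add_index'] <;> intros <;> split <;> simp [mul_add]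

lemma brak_add_right (A B C : MatC) : brak A (B + C) = brak A B + brak A C := by
  simp only [brak, matMul_add_right, matMul_add_left]; abel

lemma brak_zero_right (A : MatC) : brak A 0 = 0 := by
  simp [brak, matMul]

lemma brak_skew (A B : MatC) : -brak B A = brak A B := by
  simp [brak]

section rinner

variable (lam : ℤ → ℝ)

lemma rinner_add_left (A B C : MatC) :
    rinner lam (A + B) C = rinner lam A C + rinner lam B C := by
  unfold rinner
  rw [Finsupp.sum_add_index'] <;> intros <;> simp [add_mul, add_div]

lemma rinner_sub_left (A B C : MatC) :
    rinner lam (A - B) C = rinner lam A C - rinner lam B C := by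
  unfold rinner
  rw [Finsupp.sum_sub_index]; intros; simp [sub_mul, sub_div]

lemma rinner_smul_left (r : ℝ) (A B : MatC) : rinner lam (r • A) B = r * rinner lam A B := by
  unfold rinner
  rw [Finsupp.sum_smul_index' (by simp), Finsupp.mul_sum]
  congr 1; funext p z
  simp [Complex.real_smul, mul_assoc, mul_div_assoc]

lemma rinner_add_right (A B C : MatC) :
    rinner lam A (B + C) = rinner lam A B + rinner lam A C := by
  unfold rinner
  rw [← Finsupp.sum_add]
  congr 1; funext p z
  simp [mul_add, add_div]

lemma rinner_zero_left (A : MatC) : rinner lam 0 A = 0 := by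
  simp [rinner]

lemma rinner_zero_right (A : MatC) : rinner lam A 0 = 0 := by
  simp [rinner]

lemma rinner_neg_left (A B : MatC) : rinner lam (-A) B = -rinner lam A B := by
  simpa [rinner_zero_left] using rinner_sub_left lam 0 A B

lemma rinner_single_right (A : MatC) (s : NZ × NZ) (w : ℂ) :
    rinner lam A (Finsupp.single s w) =
      (A s * conj w).re / (4 * lam s.1.1 ^ 2 * lam s.2.1 ^ 2) := by
  unfold rinner
  rw [Finsupp.sum, Finset.sum_eq_single s]
  · simp
  · intro p _ hps
    simp [Ne.symm hps]
  · intro hs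
    simp [Finsupp.notMem_support_iff.mp hs]

end rinner

lemma smul_xiM_eq_single (lam : ℤ → ℝ) {a b : ℤ} (ha : a ≠ 0) (hb : b ≠ 0) (u : ℂ) :
    u • xiM lam a b = Finsupp.single (⟨a, ha⟩, ⟨b, hb⟩) (u * (2 * lam a * lam b : ℝ)) := by
  rw [xiM, eM, dif_pos ⟨ha, hb⟩, Finsupp.smul_single, Finsupp.smul_single, Complex.real_smul,
    smul_eq_mul, mul_one]

lemma xiM_eq_single (lam : ℤ → ℝ) {a b : ℤ} (ha : a ≠ 0) (hb : b ≠ 0) :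
    xiM lam a b = Finsupp.single (⟨a, ha⟩, ⟨b, hb⟩) ((2 * lam a * lam b : ℝ) : ℂ) := by
  simpa using smul_xiM_eq_single lam ha hb 1

noncomputable def halfBrakXi (lam : ℤ → ℝ) (a b c d : ℤ) : MatC :=
  (delz b c * lam c ^ 2) • xiM lam a d - (delz d a * lam a ^ 2) • xiM lam c b

lemma brak_smul_xiM (lam : ℤ → ℝ) {a b c d : ℤ} (ha : a ≠ 0) (hb : b ≠ 0) (hc : c ≠ 0)
    (hd : d ≠ 0) (u v : ℂ) :
    brak (u • xiM lam a b) (v • xiM lam c d) = (2 : ℝ) • ((u * v) • halfBrakXi lam a b c d) := by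
  rw [brak, halfBrakXi, smul_xiM_eq_single lam ha hb, smul_xiM_eq_single lam hc hd,
    matMul_single_single, matMul_single_single, xiM_eq_single lam ha hd, xiM_eq_single lam hc hb]
  simp only [delz, Subtype.mk.injEq, smul_sub, Finsupp.smul_single, smul_eq_mul,
    Complex.real_smul]
  by_cases hbc : b = c <;> by_cases hda : d = a <;> simp only [hbc, hda, ite_true, ite_false] <;>
    subst_vars <;> simp only [Finsupp.single_zero, zero_mul, one_mul, sub_zero, zero_sub,
      Complex.ofReal_zero, mul_zero] <;> push_cast
  · congr 1 <;> congr 1 <;> ring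
  · congr 1; ring
  · congr 2; ring

/-- The matrix `A_{cd,ab}`: half the metric adjoint of `ad ξ_{cd}`, applied to `ξ_{ab}`. -/
noncomputable def adjAdXi (lam : ℤ → ℝ) (c d a b : ℤ) : MatC :=
  (delz c a * lam d ^ 2) • xiM lam d b - (delz d b * lam c ^ 2) • xiM lam a c

lemma rinner_brak_smul_xiM {lam : ℤ → ℝ} (hlam : ∀ i, i ≠ 0 → lam i ≠ 0) {a b c d : ℤ}
    (ha : a ≠ 0) (hb : b ≠ 0) (hc : c ≠ 0) (hd : d ≠ 0) (u v : ℂ) (z : MatC) :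
    rinner lam (brak (v • xiM lam c d) z) (u • xiM lam a b) =
      2 * rinner lam ((u * conj v) • adjAdXi lam c d a b) z := by
  induction z using Finsupp.induction_linear with
  | zero => rw [brak_zero_right, rinner_zero_left, rinner_zero_right, mul_zero]
  | add z z' hz hz' => rw [brak_add_right, rinner_add_left, rinner_add_right, hz, hz', mul_add]
  | single s w =>
    obtain ⟨⟨p, hp⟩, ⟨q, hq⟩⟩ := s
    rw [smul_xiM_eq_single lam ha hb, rinner_single_right, rinner_single_right, brak,
      smul_xiM_eq_single lam hc hd, matMul_single_single, matMul_single_single, adjAdXi,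
      xiM_eq_single lam hd hb, xiM_eq_single lam ha hc]
    simp only [delz, Subtype.mk.injEq, smul_sub, Finsupp.smul_single, smul_eq_mul,
      Complex.real_smul, Finsupp.sub_apply, Finsupp.single_apply, Prod.mk.injEq, ite_and,
      apply_ite (fun f : MatC => f (⟨a, ha⟩, ⟨b, hb⟩)), Finsupp.coe_zero, Pi.zero_apply]
    have hla := hlam a ha; have hlb := hlam b hb; have hlc := hlam c hc; have hld := hlam d hd
    have hlp := hlam p hp; have hlq := hlam q hq
    -- the two sides match indices in opposite orientations (`q = b` vs `b = q`): some branches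
    -- are contradictory
    split_ifs <;> (try (exfalso; omega)) <;> subst_vars <;>
      simp only [map_mul, Complex.conj_ofReal, Complex.mul_re, Complex.mul_im, Complex.ofReal_re,
        Complex.ofReal_im, Complex.conj_re, Complex.conj_im, Complex.sub_re, Complex.sub_im,
        Complex.zero_re, Complex.neg_re, Complex.neg_im, Complex.ofReal_zero,
        mul_zero, zero_mul, sub_zero, zero_sub, one_mul, zero_div, mul_neg] <;>
      field_simp <;> ring

/-- `nablaXi lam a b c d u v` is `∇_{u ξ_{ab}} (v ξ_{cd})`. -/
noncomputable def nablaXi (lam : ℤ → ℝ) (a b c d : ℤ) (u v : ℂ) : MatC :=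
  (u * v) • halfBrakXi lam a b c d - (u * conj v) • adjAdXi lam c d a b
    - (v * conj u) • adjAdXi lam a b c d

theorem two_mul_rinner_nablaXi {lam : ℤ → ℝ} (hlam : ∀ i, i ≠ 0 → lam i ≠ 0) {a b c d : ℤ}
    (ha : a ≠ 0) (hb : b ≠ 0) (hc : c ≠ 0) (hd : d ≠ 0) (u v : ℂ) (z : MatC) :
    2 * rinner lam (nablaXi lam a b c d u v) z =
      rinner lam (brak (u • xiM lam a b) (v • xiM lam c d)) z
        - rinner lam (brak (v • xiM lam c d) z) (u • xiM lam a b)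
        + rinner lam (brak z (u • xiM lam a b)) (v • xiM lam c d) := by
  rw [← brak_skew z (u • xiM lam a b), rinner_neg_left, brak_smul_xiM lam ha hb hc hd,
    rinner_smul_left, rinner_brak_smul_xiM hlam ha hb hc hd, rinner_brak_smul_xiM hlam hc hd ha hb,
    nablaXi, rinner_sub_left, rinner_sub_left]
  ring

lemma nb1_eq_nablaXi (lam : ℤ → ℝ) (a b c d : ℤ) :
    nb1 lam a b c d = nablaXi lam a b c d 1 1 := by
  simp only [nb1, nablaXi, halfBrakXi, adjAdXi, map_one, mul_one]
  module

lemma nb2_eq_nablaXi (lam : ℤ → ℝ) (a b c d : ℤ) :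
    nb2 lam a b c d = nablaXi lam a b c d Complex.I Complex.I := by
  simp only [nb2, nablaXi, halfBrakXi, adjAdXi, Complex.conj_I, Complex.I_mul_I, mul_neg,
    neg_neg]
  module

lemma nb3_eq_nablaXi (lam : ℤ → ℝ) (a b c d : ℤ) :
    nb3 lam a b c d = nablaXi lam a b c d 1 Complex.I := by
  simp only [nb3, iXiM, nablaXi, halfBrakXi, adjAdXi, Complex.conj_I, map_one, one_mul,
    mul_one]
  module

lemma nb4_eq_nablaXi (lam : ℤ → ℝ) (a b c d : ℤ) :
    nb4 lam a b c d = nablaXi lam a b c d Complex.I 1 := by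
  simp only [nb4, iXiM, nablaXi, halfBrakXi, adjAdXi, Complex.conj_I, map_one, one_mul,
    mul_one]
  module

theorem levi_civita_identity_general (lam : ℤ → ℝ) (hpos : ∀ i : ℤ, i ≠ 0 → 0 < lam i)
    (a b c d : ℤ) (ha : a ≠ 0) (hb : b ≠ 0) (hc : c ≠ 0) (hd : d ≠ 0) (z : MatC) :
    (2 * rinner lam (nb1 lam a b c d) z =
      rinner lam (brak (xiM lam a b) (xiM lam c d)) z
        - rinner lam (brak (xiM lam c d) z) (xiM lam a b)
        + rinner lam (brak z (xiM lam a b)) (xiM lam c d)) ∧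
    (2 * rinner lam (nb2 lam a b c d) z =
      rinner lam (brak (iXiM lam a b) (iXiM lam c d)) z
        - rinner lam (brak (iXiM lam c d) z) (iXiM lam a b)
        + rinner lam (brak z (iXiM lam a b)) (iXiM lam c d)) ∧
    (2 * rinner lam (nb3 lam a b c d) z =
      rinner lam (brak (xiM lam a b) (iXiM lam c d)) z
        - rinner lam (brak (iXiM lam c d) z) (xiM lam a b)
        + rinner lam (brak z (xiM lam a b)) (iXiM lam c d)) ∧
    (2 * rinner lam (nb4 lam a b c d) z =
      rinner lam (brak (iXiM lam a b) (xiM lam c d)) z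
        - rinner lam (brak (xiM lam c d) z) (iXiM lam a b)
        + rinner lam (brak z (iXiM lam a b)) (xiM lam c d)) := by
  have hlam : ∀ i, i ≠ 0 → lam i ≠ 0 := fun i hi => (hpos i hi).ne'
  have key := two_mul_rinner_nablaXi hlam ha hb hc hd
  refine ⟨?_, ?_, ?_, ?_⟩
  · simpa only [one_smul, nb1_eq_nablaXi] using key 1 1 z
  · rw [nb2_eq_nablaXi]; exact key Complex.I Complex.I z
  · simpa only [one_smul, iXiM, nb3_eq_nablaXi] using key 1 Complex.I z
  · simpa only [one_smul, iXiM, nb4_eq_nablaXi] using key Complex.I 1 z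

/-- The explicit formulas for `∇` on the orthonormal basis `{ξ_{ab}, iξ_{ab}}` satisfy the
Levi-Civita identity `2⟨∇(x,y), z⟩ = ⟨[x,y],z⟩ − ⟨[y,z],x⟩ + ⟨[z,x],y⟩` against every
finitely supported matrix `z`. -/
theorem levi_civita_identity (lam : ℤ → ℝ) (hpos : ∀ i : ℤ, i ≠ 0 → 0 < lam i)
    (hsym : ∀ i : ℤ, lam (-i) = lam i)
    (a b c d : ℤ) (ha : a ≠ 0) (hb : b ≠ 0) (hc : c ≠ 0) (hd : d ≠ 0) (z : MatC) :
    (2 * rinner lam (nb1 lam a b c d) z =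
      rinner lam (brak (xiM lam a b) (xiM lam c d)) z
        - rinner lam (brak (xiM lam c d) z) (xiM lam a b)
        + rinner lam (brak z (xiM lam a b)) (xiM lam c d)) ∧
    (2 * rinner lam (nb2 lam a b c d) z =
      rinner lam (brak (iXiM lam a b) (iXiM lam c d)) z
        - rinner lam (brak (iXiM lam c d) z) (iXiM lam a b)
        + rinner lam (brak z (iXiM lam a b)) (iXiM lam c d)) ∧
    (2 * rinner lam (nb3 lam a b c d) z =
      rinner lam (brak (xiM lam a b) (iXiM lam c d)) z
        - rinner lam (brak (iXiM lam c d) z) (xiM lam a b)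
        + rinner lam (brak z (xiM lam a b)) (iXiM lam c d)) ∧
    (2 * rinner lam (nb4 lam a b c d) z =
      rinner lam (brak (iXiM lam a b) (xiM lam c d)) z
        - rinner lam (brak (xiM lam c d) z) (iXiM lam a b)
        + rinner lam (brak z (iXiM lam a b)) (xiM lam c d)) :=
  levi_civita_identity_general lam hpos a b c d ha hb hc hd z
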